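/- arXiv:2302.03947 — 6 statements merged into one kernel-verified Lean document; each statement's English description precedes it below -/
import Mathlib

section
/- Let G be a finite group which is not perfect (i.e. its commutator subgroup is a proper subgroup), and suppose G is generated by k elements a_1, ..., a_k whose orders are pairwise coprime. Then for every integer n ≥ k, the rank of the direct power G^n equals n. -/
/-!
Upper bound: pad the generators `a₁, …, a_k` with `1`s to `x : Fin n → G` and take the `n` cyclic
shifts of `x` as generators of `Gⁿ`. Since the entries of a shift have pairwise coprime orders,
suitable powers of it isolate each single entry `xⱼ` in each coordinate, and these generate `Gⁿ`.

Lower bound: `Gⁿ` maps onto `Aⁿ`, where `A` is the abelianization of `G`, nontrivial as `G` is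
imperfect. A commutative group generated by `r` elements has at most `exponent ^ r` elements, and
`|Aⁿ| = |A| ^ n` while `exponent Aⁿ ≤ |A|`, so `Aⁿ` needs at least `n` generators.
-/

open Function Subgroup

theorem Pi.mulSingle_mem_zpowers_of_pairwise_coprime {ι : Type*} [Fintype ι] [DecidableEq ι]
    {G : ι → Type*} [∀ i, Group (G i)] {x : ∀ i, G i}
    (hx : Pairwise fun i j => (orderOf (x i)).Coprime (orderOf (x j))) (i : ι) :
    Pi.mulSingle i (x i) ∈ zpowers x := by
  set P := ∏ j ∈ Finset.univ.erase i, orderOf (x j)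
  have hP : P.Coprime (orderOf (x i)) :=
    Nat.Coprime.prod_left fun j hj => hx (Finset.ne_of_mem_erase hj)
  obtain ⟨u, v, huv⟩ := hP.isCoprime
  -- `u * P` is `≡ 1` modulo `orderOf (x i)` and `≡ 0` modulo every other `orderOf (x j)`
  refine ⟨u * P, funext fun j => ?_⟩
  show x j ^ (u * P : ℤ) = _
  rcases eq_or_ne j i with rfl | hj
  · rw [Pi.mulSingle_eq_same]
    nth_rw 2 [← zpow_one (x j)]
    rw [zpow_eq_zpow_iff_modEq]
    exact Int.modEq_iff_dvd.mpr ⟨v, by linarith⟩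
  · rw [Pi.mulSingle_eq_of_ne hj, zpow_eq_one_iff_modEq, Int.modEq_zero_iff_dvd]
    exact (Int.natCast_dvd_natCast.mpr
      (Finset.dvd_prod_of_mem _ (Finset.mem_erase.mpr ⟨hj, Finset.mem_univ j⟩))).mul_left u

theorem Subgroup.eq_top_of_mulSingle_mem {ι G : Type*} [Finite ι] [DecidableEq ι] [Group G]
    {s : Set G} (hs : closure s = ⊤) {H : Subgroup (ι → G)}
    (hH : ∀ i, ∀ g ∈ s, Pi.mulSingle i g ∈ H) : H = ⊤ := by
  have hsingle (i : ι) : ⊤ ≤ H.comap (MonoidHom.mulSingle (fun _ => G) i) := by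
    rw [← hs, closure_le]
    exact hH i
  exact eq_top_iff.mpr fun f _ => pi_mem_of_mulSingle_mem f fun i => hsingle i (mem_top (f i))

section

variable {G : Type*} [Group G]

theorem rank_pi_fin_le_of_pairwise_coprime [Finite G] {n : ℕ} {x : Fin n → G}
    (hgen : closure (Set.range x) = ⊤)
    (hx : Pairwise fun i j => (orderOf (x i)).Coprime (orderOf (x j))) :
    Group.rank (Fin n → G) ≤ n := by
  rcases n.eq_zero_or_pos with rfl | hn
  · exact (Group.rank_eq_zero _).le
  have : NeZero n := ⟨hn.ne'⟩
  set b : Fin n → Fin n → G := fun s t => x (t - s)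
  have hb : closure (Set.range b) = ⊤ := by
    refine eq_top_of_mulSingle_mem hgen ?_
    rintro t _ ⟨j, rfl⟩
    have hsingle := Pi.mulSingle_mem_zpowers_of_pairwise_coprime (x := b (t - j))
      (hx.comp_of_injective sub_left_injective) t
    rw [show b (t - j) t = x j by simp [b]] at hsingle
    exact zpowers_le_of_mem (subset_closure (Set.mem_range_self (t - j))) hsingle
  classical
  calc Group.rank (Fin n → G) ≤ (Finset.univ.image b).card := Group.rank_le (by simpa using hb)
    _ ≤ n := Finset.card_image_le.trans (by simp)

theorem pairwise_coprime_orderOf_extend_one {ι κ : Type*} {f : ι → κ} (hf : Injective f)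
    {a : ι → G} (ha : Pairwise fun i j => (orderOf (a i)).Coprime (orderOf (a j))) :
    Pairwise fun i j => (orderOf (extend f a 1 i)).Coprime (orderOf (extend f a 1 j)) := by
  intro j j' hjj'
  by_cases hj : ∃ i, f i = j
  · by_cases hj' : ∃ i, f i = j'
    · obtain ⟨i, rfl⟩ := hj
      obtain ⟨i', rfl⟩ := hj'
      rw [hf.extend_apply, hf.extend_apply]
      exact ha fun h => hjj' (congrArg f h)
    · rw [extend_apply' _ _ _ hj', Pi.one_apply, orderOf_one]
      exact Nat.coprime_one_right _
  · rw [extend_apply' _ _ _ hj, Pi.one_apply, orderOf_one]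
    exact Nat.coprime_one_left _

theorem rank_pi_le_of_pairwise_coprime [Finite G] {k : ℕ} {a : Fin k → G}
    (hgen : closure (Set.range a) = ⊤)
    (ha : Pairwise fun i j => (orderOf (a i)).Coprime (orderOf (a j))) {n : ℕ} (hn : k ≤ n) :
    Group.rank (Fin n → G) ≤ n := by
  have hinj : Injective (Fin.castLE hn) := Fin.castLE_injective hn
  refine rank_pi_fin_le_of_pairwise_coprime (x := extend (Fin.castLE hn) a 1) ?_
    (pairwise_coprime_orderOf_extend_one hinj ha)
  refine eq_top_iff.mpr (hgen ▸ closure_mono ?_)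
  rintro _ ⟨i, rfl⟩
  exact ⟨Fin.castLE hn i, hinj.extend_apply a 1 i⟩

theorem card_le_exponent_pow_rank (W : Type*) [CommGroup W] [Finite W] :
    Nat.card W ≤ Monoid.exponent W ^ Group.rank W := by
  obtain ⟨S, hcard, hS⟩ := Group.rank_spec W
  set e := Monoid.exponent W
  have : NeZero e := ⟨Monoid.exponent_ne_zero_of_finite⟩
  have hsurj : Surjective fun c : S → ZMod e => ∏ s : S, (s : W) ^ (c s).val := by
    intro w
    obtain ⟨c, rfl⟩ := (mem_closure_iff_of_fintype (s := (S : Set W))).mp (hS ▸ mem_top w)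
    refine ⟨fun s => c s, Finset.prod_congr rfl fun s _ => ?_⟩
    rw [← zpow_natCast, zpow_eq_zpow_iff_modEq, ZMod.val_intCast]
    exact (Int.mod_modEq _ _).of_dvd (Int.natCast_dvd_natCast.mpr (Monoid.order_dvd_exponent _))
  calc Nat.card W ≤ Nat.card (S → ZMod e) := Nat.card_le_card_of_surjective _ hsurj
    _ = e ^ Group.rank W := by simp [Nat.card_fun, hcard]

theorem le_rank_pi_of_nontrivial (A : Type*) [CommGroup A] [Finite A] [Nontrivial A] (n : ℕ) :
    n ≤ Group.rank (Fin n → A) := by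
  have hexp : Monoid.exponent (Fin n → A) ∣ Nat.card A :=
    Monoid.exponent_dvd_of_forall_pow_eq_one fun x => funext fun i => pow_card_eq_one'
  have hcount := card_le_exponent_pow_rank (Fin n → A)
  rw [Nat.card_pi, Finset.prod_const, Finset.card_univ, Fintype.card_fin] at hcount
  exact (Nat.pow_le_pow_iff_right Finite.one_lt_card).mp
    (hcount.trans (Nat.pow_le_pow_left (Nat.le_of_dvd Nat.card_pos hexp) _))

theorem le_rank_pi_of_commutator_ne_top [Finite G] (h : commutator G ≠ ⊤) (n : ℕ) :
    n ≤ Group.rank (Fin n → G) := by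
  have : Nontrivial (Abelianization G) := by
    rw [← not_subsingleton_iff_nontrivial]
    exact fun hsub => h (QuotientGroup.subsingleton_iff.mp hsub)
  calc n ≤ Group.rank (Fin n → Abelianization G) := le_rank_pi_of_nontrivial _ n
    _ ≤ Group.rank (Fin n → G) :=
      Group.rank_le_of_surjective (Abelianization.of.compLeft (Fin n))
        QuotientGroup.mk_surjective.comp_left

end

/-- If `G` is a finite imperfect group generated by `k` elements of mutually coprime
orders, then `rank (G^n) = n` for all `n ≥ k`. -/
theorem rank_pi_eq_of_imperfect (G : Type*) [Group G] [Finite G]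
    (himperfect : commutator G ≠ ⊤)
    (k : ℕ) (a : Fin k → G)
    (hgen : Subgroup.closure (Set.range a) = ⊤)
    (hcoprime : ∀ i j : Fin k, i ≠ j → Nat.Coprime (orderOf (a i)) (orderOf (a j)))
    (n : ℕ) (hn : k ≤ n) :
    Group.rank (Fin n → G) = n :=
  le_antisymm (rank_pi_le_of_pairwise_coprime hgen (fun i j => hcoprime i j) hn)
    (le_rank_pi_of_commutator_ne_top himperfect n)
end

section
/- For every integer n ≥ 2 there exists a generating set C of A_4^n with |C| = n (hence of minimum size, since rank(A_4^n) = n) such that every element of A_4^n is a product of at most 10n elements of C; that is, diam(A_4^n, C) ≤ 10n. -/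
/-- The length of `g` with respect to the set `A`: the least `n` such that `g` is a
product of `n` elements of `A` (so the identity has length `0`). -/
noncomputable def wordLength {G : Type*} [Group G] (A : Set G) (g : G) : ℕ :=
  sInf {n : ℕ | ∃ l : List G, l.length = n ∧ (∀ x ∈ l, x ∈ A) ∧ l.prod = g}

/-- The diameter of the group `G` with respect to the set `A`. -/
noncomputable def diam (G : Type*) [Group G] (A : Set G) : ℕ :=
  ⨆ g : G, wordLength A g

/-!
Index the factors of `A₄ⁿ` cyclically and take the `n` generators `xᵢ` with the 3-cycle `a`
in coordinate `i`, the double transposition `b` in coordinate `i + 1` and `1` elsewhere.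
A word in `xᵢ` and `xᵢ₋₁` reads as the same word in `a, b` at coordinate `i`, in `b, 1` at
`i + 1`, in `1, a` at `i - 1` (in `b, a` there if `n = 2`) and is `1` elsewhere. So a word
that evaluates to `h` in the first reading and to `1` in the others is `h` in coordinate `i`
and `1` elsewhere. For each of the twelve `h ∈ A₄` such a word of length at most `10`
exists, and concatenating one for each coordinate writes any element of `A₄ⁿ` as a product
of at most `10 n` generators.
-/

open Equiv

section ProdOfAtMost

variable {G : Type*}

def IsProdOfAtMost [Monoid G] (A : Set G) (L : ℕ) (g : G) : Prop :=
  ∃ l : List G, l.length ≤ L ∧ (∀ x ∈ l, x ∈ A) ∧ l.prod = g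

theorem isProdOfAtMost_one [Monoid G] (A : Set G) (L : ℕ) : IsProdOfAtMost A L 1 :=
  ⟨[], by simp, by simp, rfl⟩

namespace IsProdOfAtMost

variable {A : Set G} {L L' : ℕ} {g h : G}

theorem mono [Monoid G] (hg : IsProdOfAtMost A L g) (hL : L ≤ L') : IsProdOfAtMost A L' g :=
  let ⟨l, hl, hA, hprod⟩ := hg
  ⟨l, hl.trans hL, hA, hprod⟩

theorem mul [Monoid G] (hg : IsProdOfAtMost A L g) (hh : IsProdOfAtMost A L' h) :
    IsProdOfAtMost A (L + L') (g * h) := by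
  obtain ⟨l, hl, hlA, rfl⟩ := hg
  obtain ⟨l', hl', hl'A, rfl⟩ := hh
  refine ⟨l ++ l', by rw [List.length_append]; omega, ?_, List.prod_append⟩
  simpa [or_imp, forall_and] using ⟨hlA, hl'A⟩

theorem wordLength_le [Group G] (hg : IsProdOfAtMost A L g) : wordLength A g ≤ L := by
  obtain ⟨l, hl, hA, rfl⟩ := hg
  refine le_trans (Nat.sInf_le ?_) hl
  exact ⟨l, rfl, hA, rfl⟩

theorem mem_closure [Group G] (hg : IsProdOfAtMost A L g) : g ∈ Subgroup.closure A := by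
  obtain ⟨l, -, hA, rfl⟩ := hg
  exact Subgroup.list_prod_mem _ fun x hx => Subgroup.subset_closure (hA x hx)

end IsProdOfAtMost

theorem diam_le_of_forall_isProdOfAtMost [Group G] {A : Set G} {L : ℕ}
    (h : ∀ g, IsProdOfAtMost A L g) : diam G A ≤ L :=
  ciSup_le fun g => (h g).wordLength_le

theorem isProdOfAtMost_pi {ι : Type*} [Fintype ι] [DecidableEq ι] {M : ι → Type*}
    [∀ i, Monoid (M i)] {A : Set (∀ i, M i)} {L : ℕ}
    (h : ∀ i x, IsProdOfAtMost A L (Pi.mulSingle i x)) (g : ∀ i, M i) :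
    IsProdOfAtMost A (L * Fintype.card ι) g := by
  suffices ∀ s : Finset ι, IsProdOfAtMost A (L * s.card) (s.piecewise g 1) by
    simpa using this Finset.univ
  intro s
  induction s using Finset.induction_on with
  | empty => simpa using isProdOfAtMost_one A 0
  | insert i s hi ih =>
    have hsplit : (insert i s).piecewise g 1 = Pi.mulSingle i (g i) * s.piecewise g 1 := by
      funext j
      by_cases hj : j = i
      · subst hj; simp [hi]
      · simp [Finset.piecewise, hj]
    rw [hsplit, Finset.card_insert_of_notMem hi, mul_add_one, add_comm]
    exact (h i (g i)).mul ih

end ProdOfAtMost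

section TwoLetterWords

variable {M N : Type*} [Monoid M] [Monoid N]

def evalWord (x y : M) (w : List Bool) : M :=
  (w.map (cond · x y)).prod

@[simp]
theorem evalWord_one_one (w : List Bool) : evalWord (1 : M) 1 w = 1 := by
  simp [evalWord]

theorem map_evalWord {F : Type*} [FunLike F M N] [MonoidHomClass F M N] (f : F) (x y : M)
    (w : List Bool) : f (evalWord x y w) = evalWord (f x) (f y) w := by
  simp only [evalWord, map_list_prod, List.map_map]
  congr 2
  funext t
  cases t <;> rfl

theorem evalWord_apply {ι : Type*} {M : ι → Type*} [∀ i, Monoid (M i)] (x y : ∀ i, M i)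
    (w : List Bool) (i : ι) : evalWord x y w i = evalWord (x i) (y i) w :=
  map_evalWord (Pi.evalMonoidHom M i) x y w

theorem isProdOfAtMost_evalWord {A : Set M} {x y : M} (hx : x ∈ A) (hy : y ∈ A)
    (w : List Bool) : IsProdOfAtMost A w.length (evalWord x y w) := by
  refine ⟨w.map (cond · x y), by simp, ?_, rfl⟩
  simp only [List.mem_map]
  rintro _ ⟨t, -, rfl⟩
  cases t <;> assumption

end TwoLetterWords

section ShiftGenerators

variable {ι M : Type*} [DecidableEq ι] [Monoid M]

/-- Read in the letters `shiftGen σ a b i` (`true`) and `shiftGen σ a b (σ⁻¹ i)` (`false`),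
`w` has at the coordinates `i`, `σ i` and `σ⁻¹ i` the first, third and fourth of these values;
the second is its value at `σ i` when `σ i = σ⁻¹ i`. -/
def IsShiftWord (a b h : M) (w : List Bool) : Prop :=
  evalWord a b w = h ∧ evalWord b a w = 1 ∧ evalWord b 1 w = 1 ∧ evalWord 1 a w = 1

def shiftGen (σ : Perm ι) (a b : M) (i : ι) : ι → M :=
  Pi.mulSingle i a * Pi.mulSingle (σ i) b

variable {σ : Perm ι} {a b : M}

theorem shiftGen_apply (i j : ι) :
    shiftGen σ a b i j = (if j = i then a else 1) * (if j = σ i then b else 1) := by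
  simp [shiftGen, Pi.mulSingle_apply]

theorem shiftGen_injective (hσ : ∀ i, σ i ≠ i) (ha : a ≠ 1) (hab : a ≠ b) :
    Function.Injective (shiftGen σ a b) := by
  intro i i' h
  by_contra hne
  have hi := congrFun h i
  simp only [shiftGen_apply, ite_true, if_neg (hσ i).symm, if_neg hne, mul_one, one_mul] at hi
  split_ifs at hi
  exacts [hab hi, ha hi]

theorem evalWord_shiftGen (hσ : ∀ i, σ i ≠ i) {h : M} {w : List Bool}
    (hw : IsShiftWord a b h w) (i : ι) :
    evalWord (shiftGen σ a b i) (shiftGen σ a b (σ.symm i)) w = Pi.mulSingle i h := by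
  obtain ⟨hself, hswap, hnext, hprev⟩ := hw
  funext j
  simp only [evalWord_apply, shiftGen_apply, Pi.mulSingle_apply, apply_symm_apply]
  by_cases hj : j = i
  · subst hj
    have hj' : j ≠ σ.symm j := fun h => hσ _ (σ.symm_apply_eq.mp h.symm).symm
    simpa [(hσ j).symm, hj'] using hself
  · simp only [if_neg hj, one_mul]
    split_ifs <;> simp [*]

theorem isProdOfAtMost_shiftGen [Fintype ι] (hσ : ∀ i, σ i ≠ i) {L : ℕ}
    (hwords : ∀ h, ∃ w : List Bool, w.length ≤ L ∧ IsShiftWord a b h w) (g : ι → M) :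
    IsProdOfAtMost (Set.range (shiftGen σ a b)) (L * Fintype.card ι) g := by
  refine isProdOfAtMost_pi (fun i h => ?_) g
  obtain ⟨w, hL, hw⟩ := hwords h
  rw [← evalWord_shiftGen hσ hw i]
  exact (isProdOfAtMost_evalWord (Set.mem_range_self i) (Set.mem_range_self _) w).mono hL

end ShiftGenerators

def a4ThreeCycle : alternatingGroup (Fin 4) :=
  ⟨swap 0 1 * swap 1 2, Perm.mem_alternatingGroup.mpr (by decide)⟩

def a4DoubleTransposition : alternatingGroup (Fin 4) :=
  ⟨swap 0 1 * swap 2 3, Perm.mem_alternatingGroup.mpr (by decide)⟩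

/-- For each element of `A₄` a shortest shift word for it in `a4ThreeCycle` and
`a4DoubleTransposition`, found by exhaustive search. -/
def a4ShiftWords : List (List Bool) :=
  [[], [true, true, false, false, false], [true, true, true, false, false, false, true],
    [false, false, false], [true, true, true, true], [true, false, false, false, true],
    [true, true], [true, true, true, true, false, false, false],
    [true, true, true, true, true, false, false, false, true],
    [true, true, false, true, true, false, false], [false, true, true, false, false],
    [true, true, true, true, false, true, true, false, false]]

theorem exists_isShiftWord_a4 (h : alternatingGroup (Fin 4)) :
    ∃ w : List Bool, w.length ≤ 10 ∧ IsShiftWord a4ThreeCycle a4DoubleTransposition h w := by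
  have hcert : ∀ p : Perm (Fin 4), Perm.sign p = 1 → ∃ w ∈ a4ShiftWords, w.length ≤ 10 ∧
      evalWord a4ThreeCycle.1 a4DoubleTransposition.1 w = p ∧
      evalWord a4DoubleTransposition.1 a4ThreeCycle.1 w = 1 ∧
      evalWord a4DoubleTransposition.1 1 w = 1 ∧ evalWord 1 a4ThreeCycle.1 w = 1 := by
    decide
  obtain ⟨w, -, hlen, hw⟩ := hcert h (Perm.mem_alternatingGroup.mp h.2)
  have hval (x y : alternatingGroup (Fin 4)) : (evalWord x y w).1 = evalWord x.1 y.1 w :=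
    map_evalWord (alternatingGroup (Fin 4)).subtype x y w
  refine ⟨w, hlen, ?_⟩
  simpa only [IsShiftWord, ← Subtype.val_inj, hval, OneMemClass.coe_one] using hw

/-- For every `n ≥ 2` there is a generating set `C` of `A₄ⁿ` of size `n`
(the minimum, since `rank (A₄ⁿ) = n`) such that `diam (A₄ⁿ, C) ≤ 10 n`. -/
theorem diam_pi_alternatingGroup_four (n : ℕ) (hn : 2 ≤ n) :
    ∃ C : Finset (Fin n → ↥(alternatingGroup (Fin 4))),
      C.card = n ∧
      Subgroup.closure (C : Set (Fin n → ↥(alternatingGroup (Fin 4)))) = ⊤ ∧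
      diam (Fin n → ↥(alternatingGroup (Fin 4))) (C : Set (Fin n → ↥(alternatingGroup (Fin 4)))) ≤ 10 * n := by
  have hσ (i : Fin n) : finRotate n i ≠ i :=
    Perm.mem_support.mp (by simp [support_finRotate_of_le hn])
  let x := shiftGen (finRotate n) a4ThreeCycle a4DoubleTransposition
  have hC : ((Finset.univ.image x : Finset _) : Set _) = Set.range x := by simp
  have hprod := isProdOfAtMost_shiftGen hσ exists_isShiftWord_a4
  rw [Fintype.card_fin] at hprod
  refine ⟨Finset.univ.image x, ?_, ?_, ?_⟩
  · rw [Finset.card_image_of_injective _ (shiftGen_injective hσ (by decide) (by decide)),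
      Finset.card_univ, Fintype.card_fin]
  · rw [hC, eq_top_iff]
    exact fun g _ => (hprod g).mem_closure
  · rw [hC]
    exact diam_le_of_forall_isProdOfAtMost hprod
end

section
/- Let G be a finite non-abelian simple group generated by n elements. A set of n tuples {(a_{i1}, a_{i2}, ..., a_{ik}) : i = 1, ..., n} generates the direct power G^k if and only if both of the following hold: (1) for each j = 1, ..., k, the set {a_{1j}, a_{2j}, ..., a_{nj}} generates G; and (2) there is no automorphism f of G with f(a_{ij}) = a_{ij'} for all i = 1, ..., n, for any pair of distinct column indices j ≠ j'. -/
/-!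
Let `H ≤ G^k` project onto every factor. Inducting over sets `s` of coordinates on which `H`
surjects, add a coordinate `j`: the `j`-th coordinates of the elements of `H` that are trivial
on `s` form a normal subgroup of `G`. If it is `G`, then `H` surjects onto `s ∪ {j}`. If it is
trivial, the `j`-th coordinate on `H` is a function of the coordinates in `s`, i.e. a surjective
homomorphism `G^s → G`. The images of the factors of `G^s` are normal and commute pairwise, so
for `G` non-abelian simple such a homomorphism is an automorphism applied to one coordinate `i`,
and this automorphism maps column `i` to column `j`.
-/

open Function

lemma Pi.mul_mulSingle_mul_inv {ι : Type*} [DecidableEq ι] {M : ι → Type*} [∀ i, Group (M i)]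
    (y : ∀ i, M i) (i : ι) (x : M i) :
    y * Pi.mulSingle i x * y⁻¹ = Pi.mulSingle i (y i * x * (y i)⁻¹) := by
  ext k
  by_cases hk : k = i
  · subst hk; simp
  · simp [Pi.mulSingle_eq_of_ne hk]

namespace MonoidHom

lemma normal_range_comp_mulSingle {ι : Type*} [DecidableEq ι] {M : ι → Type*}
    [∀ i, Group (M i)] {S : Type*} [Group S] (φ : (∀ i, M i) →* S) (hφ : Surjective φ) (i : ι) :
    (φ.comp (MonoidHom.mulSingle M i)).range.Normal := by
  refine ⟨?_⟩
  rintro _ ⟨x, rfl⟩ s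
  obtain ⟨y, rfl⟩ := hφ s
  exact ⟨y i * x * (y i)⁻¹, by simp [← Pi.mul_mulSingle_mul_inv]⟩

lemma exists_eq_comp_evalMonoidHom_of_surjective {ι : Type*} [Finite ι]
    {M : ι → Type*} [∀ i, Group (M i)] {S : Type*} [Group S] [IsSimpleGroup S]
    (hS : ∃ x y : S, x * y ≠ y * x) (φ : (∀ i, M i) →* S) (hφ : Surjective φ) :
    ∃ i, ∃ ψ : M i →* S, Surjective ψ ∧ φ = ψ.comp (Pi.evalMonoidHom M i) := by
  classical
  set ψ := fun i => φ.comp (MonoidHom.mulSingle M i)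
  have hψ : ∀ i, ψ i = 1 ∨ Surjective (ψ i) := fun i =>
    ((φ.normal_range_comp_mulSingle hφ i).eq_bot_or_eq_top).imp
      MonoidHom.range_eq_bot_iff.mp MonoidHom.range_eq_top.mp
  obtain ⟨i, hi⟩ : ∃ i, Surjective (ψ i) := by
    by_contra! h
    have hφ1 : φ = 1 := MonoidHom.pi_ext fun i x =>
      DFunLike.congr_fun ((hψ i).resolve_right (h i)) x
    obtain ⟨x, y, hxy⟩ := hS
    obtain ⟨u, rfl⟩ := hφ x
    obtain ⟨v, rfl⟩ := hφ y
    simp [hφ1] at hxy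
  have hother : ∀ i', i' ≠ i → ψ i' = 1 := by
    intro i' hne
    refine (hψ i').resolve_right fun hi' => ?_
    obtain ⟨x, y, hxy⟩ := hS
    obtain ⟨u, rfl⟩ := hi' x
    obtain ⟨v, rfl⟩ := hi y
    exact hxy ((Pi.mulSingle_commute hne u v).map φ).eq
  refine ⟨i, ψ i, hi, MonoidHom.pi_ext fun i' x => ?_⟩
  by_cases hne : i' = i
  · subst hne; simp [ψ]
  · simpa [ψ, Pi.mulSingle_eq_of_ne' hne] using DFunLike.congr_fun (hother i' hne) x

lemma injective_of_ne_one {G S : Type*} [Group G] [IsSimpleGroup G] [Group S]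
    (ψ : G →* S) (hψ : ψ ≠ 1) : Injective ψ :=
  ψ.ker_eq_bot_iff.mp <| ψ.normal_ker.eq_bot_or_eq_top.resolve_right fun h =>
    hψ (MonoidHom.ker_eq_top_iff.mp h)

lemma exists_mulEquiv_of_surjective_pi {ι G : Type*} [Finite ι] [Group G] [IsSimpleGroup G]
    (hG : ∃ x y : G, x * y ≠ y * x) (φ : (ι → G) →* G) (hφ : Surjective φ) :
    ∃ i, ∃ f : G ≃* G, ∀ y, φ y = f (y i) := by
  obtain ⟨i, ψ, hψ, rfl⟩ := φ.exists_eq_comp_evalMonoidHom_of_surjective hG hφ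
  have hψ1 : ψ ≠ 1 := by
    rintro rfl
    obtain ⟨x, y, hxy⟩ := hG
    obtain ⟨u, rfl⟩ := hψ x
    obtain ⟨v, rfl⟩ := hψ y
    simp at hxy
  exact ⟨i, MulEquiv.ofBijective ψ ⟨ψ.injective_of_ne_one hψ1, hψ⟩, fun _ => rfl⟩

end MonoidHom

namespace Subgroup

lemma forall_mem_closure_apply_eq_iff {ι G : Type*} [Group G] (S : Set (ι → G)) (f : G ≃* G)
    (j j' : ι) : (∀ h ∈ closure S, f (h j) = h j') ↔ ∀ h ∈ S, f (h j) = h j' := by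
  refine ⟨fun hS h hh => hS h (subset_closure hh), fun hS h hh => ?_⟩
  have : closure S ≤
      MonoidHom.eqLocus ((f : G →* G).comp (Pi.evalMonoidHom _ j)) (Pi.evalMonoidHom _ j') :=
    (closure_le _).mpr hS
  exact this hh

variable {ι G : Type*} [Group G] [IsSimpleGroup G] {H : Subgroup (ι → G)}

lemma exists_mem_eqOn_insert [DecidableEq ι] (hG : ∃ x y : G, x * y ≠ y * x)
    (hproj : ∀ j, H.map (Pi.evalMonoidHom (fun _ => G) j) = ⊤)
    (hlink : ∀ j j', j ≠ j' → ¬∃ f : G ≃* G, ∀ h ∈ H, f (h j) = h j')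
    {s : Finset ι} {j : ι} (hj : j ∉ s) (hs : ∀ g : ι → G, ∃ h ∈ H, Set.EqOn h g s) :
    ∀ g : ι → G, ∃ h ∈ H, Set.EqOn h g ↑(insert j s) := by
  set res : H →* (s → G) := (MonoidHom.pi fun i : s => Pi.evalMonoidHom _ i.1).comp H.subtype
  set ev : H →* G := (Pi.evalMonoidHom (fun _ => G) j).comp H.subtype
  have hres : Surjective res := by
    intro y
    obtain ⟨h, hH, hh⟩ := hs fun i => if hi : i ∈ s then y ⟨i, hi⟩ else 1
    exact ⟨⟨h, hH⟩, funext fun ⟨i, hi⟩ => by simpa [res, hi] using hh hi⟩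
  have hev : Surjective ev := by
    rw [← MonoidHom.range_eq_top, MonoidHom.range_comp, range_subtype]
    exact hproj j
  rcases (res.normal_ker.map ev hev).eq_bot_or_eq_top with hbot | htop
  · exfalso
    set φ := res.liftOfRightInverse _ (rightInverse_surjInv hres) ⟨ev, (map_eq_bot_iff _).mp hbot⟩
    have hφ : ∀ h : H, φ (res h) = h.1 j := res.liftOfRightInverse_comp_apply _ _ _
    obtain ⟨i, f, hf⟩ := φ.exists_mulEquiv_of_surjective_pi hG fun x => by
      obtain ⟨h, rfl⟩ := hev x
      exact ⟨res h, hφ h⟩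
    refine hlink i j (fun hij => hj (hij ▸ i.2)) ⟨f, fun h hH => ?_⟩
    exact (hf _).symm.trans (hφ ⟨h, hH⟩)
  · intro g
    obtain ⟨h, hH, hh⟩ := hs g
    obtain ⟨u, hu, hju⟩ : (h j)⁻¹ * g j ∈ res.ker.map ev := htop ▸ mem_top _
    refine ⟨h * u, mul_mem hH u.2, ?_⟩
    rw [Finset.coe_insert]
    rintro i (rfl | hi)
    · rw [Pi.mul_apply, show (u : ι → G) i = _ from hju, mul_inv_cancel_left]
    · rw [Pi.mul_apply, show (u : ι → G) i = 1 from congrFun hu ⟨i, hi⟩, mul_one, hh hi]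

lemma eq_top_of_map_evalMonoidHom_eq_top [Finite ι] (hG : ∃ x y : G, x * y ≠ y * x)
    (hproj : ∀ j, H.map (Pi.evalMonoidHom (fun _ => G) j) = ⊤)
    (hlink : ∀ j j', j ≠ j' → ¬∃ f : G ≃* G, ∀ h ∈ H, f (h j) = h j') : H = ⊤ := by
  classical
  have := Fintype.ofFinite ι
  have hfill : ∀ s : Finset ι, ∀ g : ι → G, ∃ h ∈ H, Set.EqOn h g s := by
    intro s
    induction s using Finset.induction_on with
    | empty => exact fun g => ⟨1, one_mem H, by simp⟩
    | insert j s hj ih => exact exists_mem_eqOn_insert hG hproj hlink hj ih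
  refine (eq_top_iff' H).mpr fun g => ?_
  obtain ⟨h, hH, hh⟩ := hfill Finset.univ g
  rwa [show h = g from funext fun i => hh (Finset.mem_coe.mpr (Finset.mem_univ i))] at hH

lemma eq_top_iff_map_evalMonoidHom_eq_top [Finite ι] (hG : ∃ x y : G, x * y ≠ y * x) :
    H = ⊤ ↔ (∀ j, H.map (Pi.evalMonoidHom (fun _ => G) j) = ⊤) ∧
      ∀ j j', j ≠ j' → ¬∃ f : G ≃* G, ∀ h ∈ H, f (h j) = h j' := by
  refine ⟨?_, fun ⟨hproj, hlink⟩ => eq_top_of_map_evalMonoidHom_eq_top hG hproj hlink⟩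
  rintro rfl
  refine ⟨fun j => map_top_of_surjective _ fun x => ⟨fun _ => x, rfl⟩, ?_⟩
  rintro j j' hne ⟨f, hf⟩
  classical
  obtain ⟨x, y, hxy⟩ := hG
  have hx : x ≠ 1 := by rintro rfl; simp at hxy
  simpa [Pi.mulSingle_eq_of_ne hne, hx.symm] using hf (Pi.mulSingle j' x) (mem_top _)

end Subgroup

open Subgroup in
theorem hall_criterion_general (G : Type*) [Group G] [IsSimpleGroup G]
    (hnonabelian : ∃ x y : G, x * y ≠ y * x)
    (n k : ℕ)
    (a : Fin n → Fin k → G) :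
    Subgroup.closure (Set.range a) = ⊤ ↔
      ((∀ j : Fin k, Subgroup.closure (Set.range fun i : Fin n => a i j) = ⊤) ∧
        ∀ j j' : Fin k, j ≠ j' →
          ¬∃ f : G ≃* G, ∀ i : Fin n, f (a i j) = a i j') := by
  have hcol : ∀ j, (closure (Set.range a)).map (Pi.evalMonoidHom (fun _ => G) j) =
      closure (Set.range fun i => a i j) := fun j => by
    rw [MonoidHom.map_closure, ← Set.range_comp]
    rfl
  simp only [eq_top_iff_map_evalMonoidHom_eq_top hnonabelian, hcol,
    forall_mem_closure_apply_eq_iff, Set.forall_mem_range]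

/-- Hall's criterion: if `G` is a finite non-abelian simple group generated by `n`
elements, then `n` tuples `(a i : Fin k → G)` generate `G^k` if and only if each
column generates `G` and no automorphism of `G` maps one column to another. -/
theorem hall_criterion (G : Type*) [Group G] [Finite G] [IsSimpleGroup G]
    (hnonabelian : ∃ x y : G, x * y ≠ y * x)
    (n k : ℕ)
    (hgen : ∃ S : Finset G, S.card = n ∧ Subgroup.closure (S : Set G) = ⊤)
    (a : Fin n → Fin k → G) :
    Subgroup.closure (Set.range a) = ⊤ ↔
      ((∀ j : Fin k, Subgroup.closure (Set.range fun i : Fin n => a i j) = ⊤) ∧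
        ∀ j j' : Fin k, j ≠ j' →
          ¬∃ f : G ≃* G, ∀ i : Fin n, f (a i j) = a i j') :=
  hall_criterion_general G hnonabelian n k a
end

section
/- Let k be a positive integer and let (s_1, ..., s_k) and (t_1, ..., t_k) be elements of A_5^k. The pair {(s_1, ..., s_k), (t_1, ..., t_k)} generates A_5^k if and only if both of the following hold: (1) for each i = 1, ..., k, the set {s_i, t_i} generates A_5; and (2) there is no automorphism f of A_5 with f(s_i) = s_j and f(t_i) = t_j for any pair of distinct indices i ≠ j. -/
/-!
By Goursat's lemma, a subgroup of `S × S` with `S` simple that projects onto both factors is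
either everything or the graph of an automorphism. So conditions (1) and (2) say exactly that
`H = ⟨s, t⟩` projects onto every factor and onto every pair of factors of `A₅ ^ k`.

For a perfect group this forces `H` to be everything. Fix a coordinate `i` and let `N_T` be the
set of `i`-th coordinates of the elements of `H` that are trivial on `T`. Then
`⁅N_S, N_T⁆ ≤ N_{S ∪ T}`, and `N_∅ = N_{j} = A₅` for `j ≠ i`, so by induction
`N_T ⊇ ⁅A₅, A₅⁆ = A₅` for all `T ∌ i`. Taking `T` to be all the other coordinates puts every
`Pi.mulSingle i a` in `H`.
-/

open Function
open scoped commutatorElement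

namespace Subgroup

section Goursat

variable {G H : Type*} [Group G] [Group H] {I : Subgroup (G × H)}

lemma goursatSnd_eq_top_of_goursatFst_eq_top (hI₂ : Surjective (Prod.snd ∘ I.subtype))
    (h : I.goursatFst = ⊤) : I.goursatSnd = ⊤ := by
  refine (eq_top_iff' _).2 fun b => ?_
  obtain ⟨⟨x, hx⟩, rfl⟩ := hI₂ b
  have hx₁ : (x.1, (1 : H)) ∈ I := mem_goursatFst.1 (h ▸ mem_top x.1)
  exact mem_goursatSnd.2 (by simpa [Prod.mul_def] using mul_mem (inv_mem hx₁) hx)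

lemma goursatFst_eq_top_of_goursatSnd_eq_top (hI₁ : Surjective (Prod.fst ∘ I.subtype))
    (h : I.goursatSnd = ⊤) : I.goursatFst = ⊤ := by
  refine (eq_top_iff' _).2 fun a => ?_
  obtain ⟨⟨x, hx⟩, rfl⟩ := hI₁ a
  have hx₂ : ((1 : G), x.2) ∈ I := mem_goursatSnd.1 (h ▸ mem_top x.2)
  exact mem_goursatFst.2 (by simpa [Prod.mul_def] using mul_mem hx (inv_mem hx₂))

lemma eq_top_of_goursatFst_eq_top (hI₂ : Surjective (Prod.snd ∘ I.subtype))
    (h : I.goursatFst = ⊤) : I = ⊤ := by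
  rw [eq_top_iff, ← top_prod_top, ← h, ← goursatSnd_eq_top_of_goursatFst_eq_top hI₂ h]
  exact goursatFst_prod_goursatSnd_le I

theorem eq_top_or_exists_mulEquiv_eq_graph [IsSimpleGroup G] [IsSimpleGroup H]
    (hI₁ : Surjective (Prod.fst ∘ I.subtype)) (hI₂ : Surjective (Prod.snd ∘ I.subtype)) :
    I = ⊤ ∨ ∃ e : G ≃* H, I = e.toMonoidHom.graph := by
  rcases IsSimpleGroup.eq_bot_or_eq_top_of_normal _ (normal_goursatFst hI₁) with hF | hF
  · rcases IsSimpleGroup.eq_bot_or_eq_top_of_normal _ (normal_goursatSnd hI₂) with hS | hS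
    · right
      obtain ⟨e, he⟩ := I.subtype.exists_mulEquiv_range_eq_graph hI₁ hI₂ fun x y => by
        simpa [QuotientGroup.eq, hF, hS, inv_mul_eq_one, eq_comm] using
          mk_goursatFst_eq_iff_mk_goursatSnd_eq hI₁ hI₂ x.2 y.2
      exact ⟨e, by rwa [range_subtype] at he⟩
    · exact .inl <|
        eq_top_of_goursatFst_eq_top hI₂ (goursatFst_eq_top_of_goursatSnd_eq_top hI₁ hS)
  · exact .inl (eq_top_of_goursatFst_eq_top hI₂ hF)

end Goursat

section Pi

variable {ι : Type*} {G : ι → Type*} [∀ i, Group (G i)]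

def evalOfEqOneOn (H : Subgroup (∀ i, G i)) (i : ι) (T : Finset ι) : Subgroup (G i) :=
  (H ⊓ ⨅ j ∈ T, (Pi.evalMonoidHom G j).ker).map (Pi.evalMonoidHom G i)

variable {H : Subgroup (∀ i, G i)} {i : ι}

lemma mem_evalOfEqOneOn {T : Finset ι} {c : G i} :
    c ∈ H.evalOfEqOneOn i T ↔ ∃ x ∈ H, (∀ j ∈ T, x j = 1) ∧ x i = c := by
  simp [evalOfEqOneOn, and_assoc]

lemma evalOfEqOneOn_empty : H.evalOfEqOneOn i ∅ = H.map (Pi.evalMonoidHom G i) := by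
  simp [evalOfEqOneOn]

lemma commutator_evalOfEqOneOn_le [DecidableEq ι] (S T : Finset ι) :
    ⁅H.evalOfEqOneOn i S, H.evalOfEqOneOn i T⁆ ≤ H.evalOfEqOneOn i (S ∪ T) := by
  rw [commutator_le]
  intro _ hx _ hy
  obtain ⟨x, hxH, hxS, rfl⟩ := mem_evalOfEqOneOn.1 hx
  obtain ⟨y, hyH, hyT, rfl⟩ := mem_evalOfEqOneOn.1 hy
  refine mem_evalOfEqOneOn.2 ⟨(⁅x, y⁆ : ∀ i, G i), ?_, fun j hj => ?_, rfl⟩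
  · rw [commutatorElement_def]
    exact mul_mem (mul_mem (mul_mem hxH hyH) (inv_mem hxH)) (inv_mem hyH)
  · rcases Finset.mem_union.1 hj with hj | hj
    · simp [commutatorElement_def, hxS j hj]
    · simp [commutatorElement_def, hyT j hj]

lemma evalOfEqOneOn_eq_top [DecidableEq ι] (hG : _root_.commutator (G i) = ⊤)
    (h₀ : H.map (Pi.evalMonoidHom G i) = ⊤) {T : Finset ι}
    (h₁ : ∀ j ∈ T, H.evalOfEqOneOn i {j} = ⊤) : H.evalOfEqOneOn i T = ⊤ := by
  induction T using Finset.induction_on with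
  | empty => rwa [evalOfEqOneOn_empty]
  | insert j T _ ih =>
    refine top_unique ?_
    calc ⊤ = ⁅H.evalOfEqOneOn i {j}, H.evalOfEqOneOn i T⁆ := by
          rw [h₁ j (Finset.mem_insert_self j T),
            ih fun j' hj' => h₁ j' (Finset.mem_insert_of_mem hj'), ← _root_.commutator_def, hG]
      _ ≤ H.evalOfEqOneOn i (insert j T) := commutator_evalOfEqOneOn_le {j} T

lemma evalOfEqOneOn_singleton_eq_top {j : ι}
    (h : H.map ((Pi.evalMonoidHom G i).prod (Pi.evalMonoidHom G j)) = ⊤) :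
    H.evalOfEqOneOn i {j} = ⊤ := by
  refine (eq_top_iff' _).2 fun c => ?_
  obtain ⟨x, hxH, hx⟩ := (h ▸ mem_top (c, 1) :)
  simp only [MonoidHom.prod_apply, Pi.evalMonoidHom_apply, Prod.mk.injEq] at hx
  exact mem_evalOfEqOneOn.2 ⟨x, hxH, by simpa using hx.2, hx.1⟩

theorem eq_top_of_map_eval_eq_top_of_map_evalPair_eq_top [Finite ι] [DecidableEq ι]
    (hG : ∀ i, _root_.commutator (G i) = ⊤) (h₁ : ∀ i, H.map (Pi.evalMonoidHom G i) = ⊤)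
    (h₂ : ∀ i j, i ≠ j → H.map ((Pi.evalMonoidHom G i).prod (Pi.evalMonoidHom G j)) = ⊤) :
    H = ⊤ := by
  have := Fintype.ofFinite ι
  refine (eq_top_iff' _).2 fun x => pi_mem_of_mulSingle_mem x fun i => ?_
  have hi : H.evalOfEqOneOn i (Finset.univ.erase i) = ⊤ :=
    evalOfEqOneOn_eq_top (hG i) (h₁ i) fun j hj =>
      evalOfEqOneOn_singleton_eq_top (h₂ i j (Finset.ne_of_mem_erase hj).symm)
  obtain ⟨y, hyH, hy, hyi⟩ := mem_evalOfEqOneOn.1 (hi ▸ mem_top (x i))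
  convert hyH
  ext j
  rcases eq_or_ne j i with rfl | hj
  · simp [hyi]
  · simp [hj, hy j (Finset.mem_erase.2 ⟨hj, Finset.mem_univ j⟩)]

end Pi

section Power

variable {ι G : Type*} [Group G]

theorem eq_top_iff_map_eval_eq_top_and_not_exists_mulEquiv [Finite ι] [IsSimpleGroup G]
    (hG : _root_.commutator G = ⊤) {H : Subgroup (ι → G)} :
    H = ⊤ ↔ (∀ i, H.map (Pi.evalMonoidHom (fun _ => G) i) = ⊤) ∧
      ∀ i j, i ≠ j → ¬∃ e : G ≃* G, ∀ x ∈ H, e (x i) = x j := by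
  classical
  constructor
  · rintro rfl
    refine ⟨fun i => map_top_of_surjective _ fun a => ⟨fun _ => a, rfl⟩, ?_⟩
    rintro i j hij ⟨e, he⟩
    obtain ⟨c, hc⟩ := exists_ne (1 : G)
    simpa [hij, hc.symm] using he (Pi.mulSingle j c) (mem_top _)
  · rintro ⟨h₁, h₂⟩
    refine eq_top_of_map_eval_eq_top_of_map_evalPair_eq_top (fun _ => hG) h₁ fun i j hij => ?_
    set K := H.map ((Pi.evalMonoidHom _ i).prod (Pi.evalMonoidHom _ j))
    have hK₁ : Surjective (Prod.fst ∘ K.subtype) := fun a => by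
      obtain ⟨x, hx, rfl⟩ := (h₁ i ▸ mem_top a :)
      exact ⟨⟨_, x, hx, rfl⟩, rfl⟩
    have hK₂ : Surjective (Prod.snd ∘ K.subtype) := fun b => by
      obtain ⟨x, hx, rfl⟩ := (h₁ j ▸ mem_top b :)
      exact ⟨⟨_, x, hx, rfl⟩, rfl⟩
    refine (eq_top_or_exists_mulEquiv_eq_graph hK₁ hK₂).resolve_right ?_
    rintro ⟨e, he⟩
    refine h₂ i j hij ⟨e, fun x hx => ?_⟩
    have hxK : (x i, x j) ∈ K := mem_map_of_mem _ hx
    exact MonoidHom.mem_graph.1 (he ▸ hxK)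

end Power

end Subgroup

lemma MonoidHom.forall_mem_closure_pair_iff {G M : Type*} [Group G] [Monoid M] {f g : G →* M}
    {a b : G} : (∀ x ∈ Subgroup.closure {a, b}, f x = g x) ↔ f a = g a ∧ f b = g b := by
  refine ⟨fun h => ⟨h a (Subgroup.subset_closure (by simp)),
    h b (Subgroup.subset_closure (by simp))⟩, fun h x hx => MonoidHom.eqOn_closure ?_ hx⟩
  rintro _ (rfl | rfl)
  exacts [h.1, h.2]

theorem hall_criterion_A5_general (k : ℕ)
    (s t : Fin k → ↥(alternatingGroup (Fin 5))) :
    Subgroup.closure {s, t} = ⊤ ↔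
      ((∀ i : Fin k, Subgroup.closure {s i, t i} = ⊤) ∧
        ∀ i j : Fin k, i ≠ j →
          ¬∃ f : ↥(alternatingGroup (Fin 5)) ≃* ↥(alternatingGroup (Fin 5)),
            f (s i) = s j ∧ f (t i) = t j) := by
  have map_eval_closure (i : Fin k) :
      (Subgroup.closure {s, t}).map (Pi.evalMonoidHom _ i) = Subgroup.closure {s i, t i} := by
    rw [MonoidHom.map_closure, Set.image_pair]
    rfl
  have graph_closure (i j : Fin k)
      (f : ↥(alternatingGroup (Fin 5)) ≃* ↥(alternatingGroup (Fin 5))) :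
      (∀ x ∈ Subgroup.closure {s, t}, f (x i) = x j) ↔ f (s i) = s j ∧ f (t i) = t j :=
    MonoidHom.forall_mem_closure_pair_iff (f := (f : _ →* _).comp (Pi.evalMonoidHom _ i))
      (g := Pi.evalMonoidHom _ j) (a := s) (b := t)
  rw [Subgroup.eq_top_iff_map_eval_eq_top_and_not_exists_mulEquiv
    (commutator_alternatingGroup_eq_top (by simp))]
  simp only [map_eval_closure, graph_closure]

/-- Hall's criterion for `A₅^k`: the pair of tuples `(s₁, …, s_k)`, `(t₁, …, t_k)`
generates `A₅^k` if and only if each pair `{sᵢ, tᵢ}` generates `A₅` and no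
automorphism of `A₅` maps `(sᵢ, tᵢ)` to `(sⱼ, tⱼ)` for `i ≠ j`. -/
theorem hall_criterion_A5 (k : ℕ) (hk : 1 ≤ k)
    (s t : Fin k → ↥(alternatingGroup (Fin 5))) :
    Subgroup.closure {s, t} = ⊤ ↔
      ((∀ i : Fin k, Subgroup.closure {s i, t i} = ⊤) ∧
        ∀ i j : Fin k, i ≠ j →
          ¬∃ f : ↥(alternatingGroup (Fin 5)) ≃* ↥(alternatingGroup (Fin 5)),
            f (s i) = s j ∧ f (t i) = t j) :=
  hall_criterion_A5_general k s t
end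

section
/- For every odd integer n ≥ 5, with a = (1 2 3 ⋯ n) and b = (1 2)(3 4), the diameter of A_n^2 with respect to the generating set G = {(a, b), (b, a)} satisfies diam(A_n^2, G) ≤ 2n · diam(A_n, {b, a²}). -/
/-- The diameter of the subgroup `H` with respect to the set `A`: the supremum over
`g ∈ H` of the length of `g` over `A`. -/
noncomputable def diamSubgroup {G : Type*} [Group G] (H : Subgroup G) (A : Set G) : ℕ :=
  ⨆ g : H, wordLength A (g : G)

/-!
A word of length `m` in `(a, b), (b, a)` projects, in each coordinate, to a word in `a` and `b`,
and `a = (a²)^((n+1)/2)`; so both coordinates of any `(g, h)` lie in the monoid generated by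
`b` and `a²`. Conversely `(b, 1) = (b, a)ⁿ` and `(a², 1) = (a, b)²` because `aⁿ = 1`, `b² = 1` and
`n` is odd, and symmetrically for the second factor. Hence `(g, h) = (g, 1)(1, h)` has length at
most `n` times the sum of the lengths of `g` and `h` over `{b, a²}`.
-/

open Equiv

section WordBall

variable {M : Type*} [Monoid M] {A : Set M} {m k : ℕ} {g h : M}

def wordBall (A : Set M) (m : ℕ) : Set M :=
  {g | ∃ l : List M, l.length ≤ m ∧ (∀ x ∈ l, x ∈ A) ∧ l.prod = g}

theorem wordBall_mono (hmk : m ≤ k) : wordBall A m ⊆ wordBall A k :=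
  fun _ ⟨l, hl, hlA, hprod⟩ => ⟨l, hl.trans hmk, hlA, hprod⟩

theorem one_mem_wordBall_zero : (1 : M) ∈ wordBall A 0 :=
  ⟨[], le_rfl, by simp, rfl⟩

theorem mem_wordBall_one (hg : g ∈ A) : g ∈ wordBall A 1 :=
  ⟨[g], le_rfl, by simpa, by simp⟩

theorem mul_mem_wordBall (hg : g ∈ wordBall A m) (hh : h ∈ wordBall A k) :
    g * h ∈ wordBall A (m + k) := by
  obtain ⟨l, hl, hlA, rfl⟩ := hg
  obtain ⟨l', hl', hlA', rfl⟩ := hh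
  refine ⟨l ++ l', by simp only [List.length_append]; omega, ?_, List.prod_append⟩
  simp only [List.mem_append]
  rintro x (hx | hx)
  exacts [hlA x hx, hlA' x hx]

theorem pow_mem_wordBall (hg : g ∈ wordBall A m) : ∀ k : ℕ, g ^ k ∈ wordBall A (k * m)
  | 0 => by simpa using one_mem_wordBall_zero
  | k + 1 => by
    rw [pow_succ, add_one_mul]
    exact mul_mem_wordBall (pow_mem_wordBall hg k) hg

theorem map_mem_wordBall {N F : Type*} [Monoid N] [FunLike F M N] [MonoidHomClass F M N]
    (φ : F) {B : Set N} {c : ℕ} (hφ : ∀ a ∈ A, φ a ∈ wordBall B c) (hg : g ∈ wordBall A m) :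
    φ g ∈ wordBall B (c * m) := by
  obtain ⟨l, hl, hlA, rfl⟩ := hg
  refine wordBall_mono (Nat.mul_le_mul_left c hl) ?_
  induction l with
  | nil => simpa using one_mem_wordBall_zero
  | cons a l ih =>
    rw [List.prod_cons, map_mul, List.length_cons, Nat.mul_succ, add_comm]
    exact mul_mem_wordBall (hφ a (hlA a List.mem_cons_self))
      (ih (by simp at hl; omega) fun x hx => hlA x (List.mem_cons_of_mem a hx))

end WordBall

section WordLength

variable {G : Type*} [Group G] {A : Set G} {m : ℕ} {g : G}

theorem wordLength_le_of_mem_wordBall (hg : g ∈ wordBall A m) : wordLength A g ≤ m := by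
  obtain ⟨l, hl, hlA, hprod⟩ := hg
  exact le_trans (Nat.sInf_le ⟨l, rfl, hlA, hprod⟩) hl

theorem mem_wordBall_wordLength (hg : g ∈ wordBall A m) : g ∈ wordBall A (wordLength A g) := by
  obtain ⟨l, -, hlA, hprod⟩ := hg
  have hne : {k : ℕ | ∃ l : List G, l.length = k ∧ (∀ x ∈ l, x ∈ A) ∧ l.prod = g}.Nonempty :=
    ⟨l.length, l, rfl, hlA, hprod⟩
  obtain ⟨l', hl', hlA', hprod'⟩ := Nat.sInf_mem hne
  exact ⟨l', hl'.le, hlA', hprod'⟩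

theorem wordLength_eq_zero_of_forall_notMem (hg : ∀ m, g ∉ wordBall A m) :
    wordLength A g = 0 := by
  have hempty : {k : ℕ | ∃ l : List G, l.length = k ∧ (∀ x ∈ l, x ∈ A) ∧ l.prod = g} = ∅ :=
    Set.eq_empty_of_forall_notMem fun k ⟨l, hl, hlA, hprod⟩ => hg k ⟨l, hl.le, hlA, hprod⟩
  rw [wordLength, hempty, Nat.sInf_empty]

theorem wordLength_le_diamSubgroup {H : Subgroup G} [Finite H] (hg : g ∈ H) :
    wordLength A g ≤ diamSubgroup H A :=
  le_ciSup (f := fun g : H => wordLength A (g : G)) (Set.finite_range _).bddAbove ⟨g, hg⟩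

theorem diamSubgroup_le {H : Subgroup G} {d : ℕ} (hd : ∀ g ∈ H, wordLength A g ≤ d) :
    diamSubgroup H A ≤ d :=
  ciSup_le fun g => hd g g.2

end WordLength

section PairGenerators

variable {G : Type*} [Group G] {x y : G} {n : ℕ}

theorem pow_eq_self_of_sq_eq_one (hy : y ^ 2 = 1) (hn : Odd n) : y ^ n = y := by
  obtain ⟨k, rfl⟩ := hn
  rw [pow_succ, pow_mul, hy, one_pow, one_mul]

theorem swap_mem_wordBall_pair {s : G × G} (hs : s ∈ ({(x, y), (y, x)} : Set (G × G))) :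
    MulEquiv.prodComm s ∈ wordBall {(x, y), (y, x)} 1 := by
  apply mem_wordBall_one
  rcases hs with rfl | rfl <;> simp

theorem fst_mem_wordBall_pair (hx : x ^ n = 1) (hn : Odd n) {s : G × G}
    (hs : s ∈ ({(x, y), (y, x)} : Set (G × G))) :
    MonoidHom.fst G G s ∈ wordBall {y, x ^ 2} ((n + 1) / 2) := by
  have hn1 : 1 ≤ (n + 1) / 2 := by obtain ⟨k, rfl⟩ := hn; omega
  rcases hs with rfl | rfl
  · have hx2 : (x ^ 2) ^ ((n + 1) / 2) = x := by
      have h2 : 2 * ((n + 1) / 2) = n + 1 := by obtain ⟨k, rfl⟩ := hn; omega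
      rw [← pow_mul, h2, pow_succ, hx, one_mul]
    simpa [hx2] using pow_mem_wordBall
      (mem_wordBall_one (show x ^ 2 ∈ ({y, x ^ 2} : Set G) by simp)) ((n + 1) / 2)
  · exact wordBall_mono hn1 (mem_wordBall_one (by simp))

theorem inl_mem_wordBall_pair (hx : x ^ n = 1) (hy : y ^ 2 = 1) (hn : Odd n) (h2n : 2 ≤ n)
    {t : G} (ht : t ∈ ({y, x ^ 2} : Set G)) :
    MonoidHom.inl G G t ∈ wordBall {(x, y), (y, x)} n := by
  simp only [Set.mem_insert_iff, Set.mem_singleton_iff] at ht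
  rcases ht with ht | ht <;> rw [ht]
  · have hpow : ((y, x) : G × G) ^ n = (y, 1) := by
      rw [Prod.pow_mk, pow_eq_self_of_sq_eq_one hy hn, hx]
    simpa [hpow] using pow_mem_wordBall
      (mem_wordBall_one (show (y, x) ∈ ({(x, y), (y, x)} : Set (G × G)) by simp)) n
  · have hpow : ((x, y) : G × G) ^ 2 = (x ^ 2, 1) := by rw [Prod.pow_mk, hy]
    refine wordBall_mono h2n ?_
    simpa [hpow] using pow_mem_wordBall
      (mem_wordBall_one (show (x, y) ∈ ({(x, y), (y, x)} : Set (G × G)) by simp)) 2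

theorem wordLength_pair_le (hx : x ^ n = 1) (hy : y ^ 2 = 1) (hn : Odd n) (h2n : 2 ≤ n)
    (g h : G) :
    wordLength {(x, y), (y, x)} (g, h) ≤
      n * (wordLength {y, x ^ 2} g + wordLength {y, x ^ 2} h) := by
  by_cases hgen : ∃ m, (g, h) ∈ wordBall {(x, y), (y, x)} m
  · obtain ⟨m, hm⟩ := hgen
    have hg : g ∈ wordBall {y, x ^ 2} ((n + 1) / 2 * m) :=
      map_mem_wordBall _ (fun _ => fst_mem_wordBall_pair hx hn) hm
    have hh : h ∈ wordBall {y, x ^ 2} ((n + 1) / 2 * (1 * m)) :=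
      map_mem_wordBall _ (fun _ => fst_mem_wordBall_pair hx hn)
        (map_mem_wordBall MulEquiv.prodComm (fun _ => swap_mem_wordBall_pair) hm)
    have hg1 := map_mem_wordBall (MonoidHom.inl G G)
      (fun _ => inl_mem_wordBall_pair hx hy hn h2n) (mem_wordBall_wordLength hg)
    have h1h := map_mem_wordBall MulEquiv.prodComm (fun _ => swap_mem_wordBall_pair)
      (map_mem_wordBall (MonoidHom.inl G G)
        (fun _ => inl_mem_wordBall_pair hx hy hn h2n) (mem_wordBall_wordLength hh))
    apply wordLength_le_of_mem_wordBall
    simpa [mul_add] using mul_mem_wordBall hg1 h1h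
  · simp only [not_exists] at hgen
    rw [wordLength_eq_zero_of_forall_notMem hgen]
    exact Nat.zero_le _

theorem diamSubgroup_prod_le {H : Subgroup G} [Finite H] (hx : x ^ n = 1) (hy : y ^ 2 = 1)
    (hn : Odd n) (h2n : 2 ≤ n) :
    diamSubgroup (H.prod H) {(x, y), (y, x)} ≤ 2 * n * diamSubgroup H {y, x ^ 2} := by
  refine diamSubgroup_le fun ⟨g, h⟩ hgh => (wordLength_pair_le hx hy hn h2n g h).trans ?_
  obtain ⟨hg, hh⟩ := Subgroup.mem_prod.1 hgh
  calc n * (wordLength {y, x ^ 2} g + wordLength {y, x ^ 2} h)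
      ≤ n * (diamSubgroup H {y, x ^ 2} + diamSubgroup H {y, x ^ 2}) := by
        gcongr <;> exact wordLength_le_diamSubgroup ‹_›
    _ = 2 * n * diamSubgroup H {y, x ^ 2} := by ring

end PairGenerators

theorem finRotate_pow_self {n : ℕ} (hn : 2 ≤ n) : finRotate n ^ n = 1 := by
  have horder : orderOf (finRotate n) = n := by
    rw [Perm.IsCycle.orderOf (isCycle_finRotate_of_le hn), support_finRotate_of_le hn]
    simp
  simpa [horder] using pow_orderOf_eq_one (finRotate n)

/-- For every odd `n ≥ 5`, with `a = (1 2 ⋯ n)` and `b = (1 2)(3 4)`,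
`diam (Aₙ², {(a,b), (b,a)}) ≤ 2 n · diam (Aₙ, {b, a²})`. -/
theorem diam_sq_alternating_odd (n : ℕ) (hn : 5 ≤ n) (hodd : Odd n)
    (a b : Equiv.Perm (Fin n))
    (ha : a = finRotate n)
    (hb : b = Equiv.swap (⟨0, by omega⟩ : Fin n) ⟨1, by omega⟩ *
          Equiv.swap (⟨2, by omega⟩ : Fin n) ⟨3, by omega⟩) :
    diamSubgroup ((alternatingGroup (Fin n)).prod (alternatingGroup (Fin n)))
        {(a, b), (b, a)} ≤
      2 * n * diamSubgroup (alternatingGroup (Fin n)) {b, a ^ 2} := by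
  have han : a ^ n = 1 := ha ▸ finRotate_pow_self (by omega)
  have hb2 : b ^ 2 = 1 := by
    have hdisj : Perm.Disjoint (swap (⟨0, by omega⟩ : Fin n) ⟨1, by omega⟩)
        (swap ⟨2, by omega⟩ ⟨3, by omega⟩) :=
      Perm.disjoint_swap_swap (by simp [Fin.ext_iff])
    rw [hb, pow_two, hdisj.symm.commute.mul_mul_mul_comm, swap_mul_self, swap_mul_self, one_mul]
  exact diamSubgroup_prod_le han hb2 hodd (by omega)
end

section
/- There exist absolute constants C > 0 and c > 0 such that for every integer n ≥ 5 there is a generating set S of A_n^2 of size two for which diam(A_n^2, S) ≤ C · n · exp((c+1) · (log n)^4 · log log n). -/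
/-!
Let `a = (p k₀ q)` be a 3-cycle and `b` an even permutation that preserves `{p, q}` and whose
powers carry `k₀` to every other point (a cycle on the complement of `{p, q}`, times `(p q)` if
parity requires it). The conjugates `bⁱ a^{±1} b⁻ⁱ` are then all the 3-cycles through `p` and `q`,
and a selection sort writes any even permutation as a product of at most `2n` of them, so
`diam (Aₙ, {a, b}) = O(n²)`. If `3` divides the order of `b`, replace `b` by `a b`, again a long
cycle, whose length is then prime to `3`. With coprime orders, the Chinese remainder theorem turns
powers of `(a, b)` and `(b, a)` into `(a, 1), (b, 1), (1, a), (1, b)`, so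
`diam (Aₙ², {(a, b), (b, a)}) = O(n³)`, far below the claimed bound.
-/

open Pointwise Equiv Equiv.Perm Finset

section WordLength

/- `insert 1 A ^ n` is the set of products of at most `n` elements of `A`. -/

variable {G : Type*} [Group G] {A B : Set G} {g : G} {n : ℕ}

lemma exists_list_of_mem_insert_one_pow (hg : g ∈ insert 1 A ^ n) :
    ∃ l : List G, l.length ≤ n ∧ (∀ x ∈ l, x ∈ A) ∧ l.prod = g := by
  induction n generalizing g with
  | zero => exact ⟨[], le_rfl, by simp, by simpa [eq_comm] using hg⟩
  | succ n ih =>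
    obtain ⟨h, hh, x, hx, rfl⟩ := Set.mem_mul.1 (pow_succ (insert 1 A) n ▸ hg)
    obtain ⟨l, hlen, hlA, rfl⟩ := ih hh
    rcases hx with rfl | hx
    · exact ⟨l, by omega, hlA, by simp⟩
    · refine ⟨l ++ [x], by simpa using hlen, ?_, by simp⟩
      simpa [or_imp, forall_and] using ⟨hlA, hx⟩

lemma wordLength_le_of_mem_insert_one_pow (hg : g ∈ insert 1 A ^ n) : wordLength A g ≤ n := by
  obtain ⟨l, hlen, hlA, hl⟩ := exists_list_of_mem_insert_one_pow hg
  exact le_trans (Nat.sInf_le ⟨l, rfl, hlA, hl⟩) hlen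

lemma diam_le_of_forall_mem_insert_one_pow (h : ∀ g : G, g ∈ insert 1 A ^ n) : diam G A ≤ n :=
  ciSup_le fun g => wordLength_le_of_mem_insert_one_pow (h g)

lemma closure_eq_top_of_forall_mem_insert_one_pow (h : ∀ g : G, g ∈ insert 1 A ^ n) :
    Subgroup.closure A = ⊤ := by
  refine eq_top_iff.2 fun g _ => ?_
  obtain ⟨l, -, hlA, rfl⟩ := exists_list_of_mem_insert_one_pow (h g)
  exact Subgroup.list_prod_mem _ fun x hx => Subgroup.subset_closure (hlA x hx)

lemma pow_mem_insert_one_pow {x : G} {k : ℕ} (hx : x ∈ A) (hk : k ≤ n) :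
    x ^ k ∈ insert 1 A ^ n :=
  Set.pow_subset_pow_right (Set.mem_insert 1 A) hk (Set.pow_mem_pow (Set.mem_insert_of_mem 1 hx))

lemma insert_one_pow_subset {k : ℕ} (h : A ⊆ insert 1 B ^ k) :
    insert 1 A ^ n ⊆ insert 1 B ^ (k * n) := by
  rw [pow_mul]
  exact Set.pow_subset_pow_left
    (Set.insert_subset (Set.one_mem_pow (Set.mem_insert 1 B)) h)

lemma insert_one_pow_subset_insert_mul {a b : G} (ha : a ^ 3 = 1) :
    (insert 1 {a, b} : Set G) ^ n ⊆ insert 1 {a, a * b} ^ (3 * n) := by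
  refine insert_one_pow_subset fun x hx => ?_
  have haS : a ∈ (insert 1 {a, a * b} : Set G) := by simp
  have habS : a * b ∈ (insert 1 {a, a * b} : Set G) := by simp
  rcases hx with rfl | rfl
  · exact Set.subset_pow (Set.mem_insert 1 _) (by norm_num) haS
  · have h := Set.mul_mem_mul haS (Set.mul_mem_mul haS habS)
    rwa [← pow_three, ← mul_assoc, ← mul_assoc, ← pow_three', ha, one_mul] at h

end WordLength

section Product

variable {G : Type*} [Group G]

lemma pow_eq_self_of_modEq_one {a : G} {r k : ℕ} (ha : a ^ r = 1) (hk : k ≡ 1 [MOD r]) :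
    a ^ k = a := by
  rw [pow_eq_pow_mod k ha, hk, ← pow_eq_pow_mod 1 ha, pow_one]

lemma pow_eq_one_of_modEq_zero {a : G} {r k : ℕ} (ha : a ^ r = 1) (hk : k ≡ 0 [MOD r]) :
    a ^ k = 1 := by
  rw [pow_eq_pow_mod k ha, hk, Nat.zero_mod, pow_zero]

theorem prod_mem_insert_one_pow_of_coprime {a b : G} {r s D : ℕ} (hr : r ≠ 0) (hs : s ≠ 0)
    (hrs : r.Coprime s) (ha : a ^ r = 1) (hb : b ^ s = 1)
    (hD : ∀ g : G, g ∈ (insert 1 {a, b} : Set G) ^ D) (x : G × G) :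
    x ∈ (insert 1 {(a, b), (b, a)} : Set (G × G)) ^ (2 * (r * s * D)) := by
  set S : Set (G × G) := insert 1 {(a, b), (b, a)}
  obtain ⟨E, hE, hEr, hEs⟩ : ∃ E < r * s, E ≡ 1 [MOD r] ∧ E ≡ 0 [MOD s] :=
    ⟨_, Nat.chineseRemainder_lt_mul hrs 1 0 hr hs, (Nat.chineseRemainder hrs 1 0).2⟩
  obtain ⟨F, hF, hFr, hFs⟩ : ∃ F < r * s, F ≡ 0 [MOD r] ∧ F ≡ 1 [MOD s] :=
    ⟨_, Nat.chineseRemainder_lt_mul hrs 0 1 hr hs, (Nat.chineseRemainder hrs 0 1).2⟩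
  have hab : ∀ k ≤ r * s, (a, b) ^ k ∈ S ^ (r * s) := fun k hk =>
    pow_mem_insert_one_pow (by simp) hk
  have hba : ∀ k ≤ r * s, (b, a) ^ k ∈ S ^ (r * s) := fun k hk =>
    pow_mem_insert_one_pow (by simp) hk
  have lift : ∀ f : G →* G × G, f '' insert 1 {a, b} ⊆ S ^ (r * s) → ∀ g, f g ∈ S ^ (r * s * D) :=
    fun f hf g => by
      rw [pow_mul]
      exact Set.pow_subset_pow_left hf (Set.image_pow f _ D ▸ Set.mem_image_of_mem f (hD g))
  have hinl : MonoidHom.inl G G '' insert 1 {a, b} ⊆ S ^ (r * s) := by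
    rintro _ ⟨g, hg | hg | hg, rfl⟩ <;> subst hg
    · rw [map_one]; exact Set.one_mem_pow (Set.mem_insert 1 _)
    · simpa [pow_eq_self_of_modEq_one ha hEr, pow_eq_one_of_modEq_zero hb hEs] using hab E hE.le
    · simpa [pow_eq_self_of_modEq_one hb hFs, pow_eq_one_of_modEq_zero ha hFr] using hba F hF.le
  have hinr : MonoidHom.inr G G '' insert 1 {a, b} ⊆ S ^ (r * s) := by
    rintro _ ⟨g, hg | hg | hg, rfl⟩ <;> subst hg
    · rw [map_one]; exact Set.one_mem_pow (Set.mem_insert 1 _)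
    · simpa [pow_eq_self_of_modEq_one ha hEr, pow_eq_one_of_modEq_zero hb hEs] using hba E hE.le
    · simpa [pow_eq_self_of_modEq_one hb hFs, pow_eq_one_of_modEq_zero ha hFr] using hab F hF.le
  rw [← Prod.fst_mul_snd x, two_mul, pow_add]
  exact Set.mul_mem_mul (lift _ hinl x.1) (lift _ hinr x.2)

end Product

section ThreeCycles

variable {α : Type*} [DecidableEq α] {p q : α}

/-- For `k ∉ {p, q}`, `swap p q * swap p k` and `swap p q * swap q k` are the two 3-cycles on
`{p, q, k}`. -/
def threeCyclesThrough (p q : α) : Set (Perm α) :=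
  {t | ∃ x ∈ ({p, q} : Set α), ∃ k, k ≠ p ∧ k ≠ q ∧ t = swap p q * swap x k}

lemma swap_mul_swap_inv {k : α} (hkp : k ≠ p) (hkq : k ≠ q) :
    (swap p q * swap p k)⁻¹ = swap p q * swap q k := by
  rw [← swap_mul_swap_mul_swap hkp hkq, mul_inv_rev, swap_inv, swap_inv, swap_comm k p,
    ← mul_assoc, ← mul_assoc, swap_mul_self, one_mul]

lemma swap_mul_swap_eq_or_eq_inv {x y k : α} (hx : x ∈ ({p, q} : Set α))
    (hy : y ∈ ({p, q} : Set α)) (hkp : k ≠ p) (hkq : k ≠ q) :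
    swap p q * swap x k = swap p q * swap y k ∨
      swap p q * swap x k = (swap p q * swap y k)⁻¹ := by
  rcases hx with rfl | rfl <;> rcases hy with rfl | rfl
  · exact .inl rfl
  · exact .inr (by rw [← swap_mul_swap_inv hkp hkq, inv_inv])
  · exact .inr (swap_mul_swap_inv hkp hkq).symm
  · exact .inl rfl

lemma exists_mul_mem_threeCyclesThrough_apply_eq {k : α} (hkp : k ≠ p) (hkq : k ≠ q) (j : α) :
    ∃ u ∈ insert 1 (threeCyclesThrough p q), ∃ v ∈ insert 1 (threeCyclesThrough p q),
      (u * v) k = j ∧ ∀ x, x ≠ p → x ≠ q → x ≠ k → x ≠ j → (u * v) x = x := by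
  have mem : ∀ x ∈ ({p, q} : Set α), ∀ k, k ≠ p → k ≠ q →
      swap p q * swap x k ∈ insert 1 (threeCyclesThrough p q) :=
    fun x hx k hkp hkq => Set.mem_insert_of_mem _ ⟨x, hx, k, hkp, hkq, rfl⟩
  by_cases hjk : j = k
  · exact ⟨1, Set.mem_insert _ _, 1, Set.mem_insert _ _, by simp [hjk], by simp⟩
  by_cases hjp : j = p
  · refine ⟨1, Set.mem_insert _ _, _, mem q (by simp) k hkp hkq, ?_, ?_⟩
    · simp [hjp]
    · intro x hxp hxq hxk _
      simp [swap_apply_of_ne_of_ne hxp hxq, swap_apply_of_ne_of_ne hxq hxk]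
  by_cases hjq : j = q
  · refine ⟨1, Set.mem_insert _ _, _, mem p (by simp) k hkp hkq, ?_, ?_⟩
    · simp [hjq]
    · intro x hxp hxq hxk _
      simp [swap_apply_of_ne_of_ne hxp hxq, swap_apply_of_ne_of_ne hxp hxk]
  refine ⟨_, mem q (by simp) j hjp hjq, _, mem p (by simp) k hkp hkq, ?_, ?_⟩
  · simp [swap_apply_of_ne_of_ne hjp hjq]
  · intro x hxp hxq hxk hxj
    simp [swap_apply_of_ne_of_ne hxp hxq, swap_apply_of_ne_of_ne hxp hxk,
      swap_apply_of_ne_of_ne hxq hxj]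

variable [Fintype α]

lemma sign_eq_one_of_mem_insert_one_threeCyclesThrough (hpq : p ≠ q) {t : Perm α}
    (ht : t ∈ insert 1 (threeCyclesThrough p q)) : sign t = 1 := by
  obtain rfl | ⟨x, hx, k, hkp, hkq, rfl⟩ := ht
  · exact map_one _
  have hxk : x ≠ k := by rcases hx with rfl | rfl <;> tauto
  simp [sign_swap hpq, sign_swap hxk]

lemma eq_one_of_sign_eq_one_of_forall_apply_eq_self {π : Perm α} (hπ : sign π = 1)
    (hfix : ∀ x, x ≠ p → x ≠ q → π x = x) : π = 1 := by
  have hsub : π.support ⊆ {p, q} := fun x hx => by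
    by_contra h
    simp only [Finset.mem_insert, Finset.mem_singleton, not_or] at h
    exact mem_support.1 hx (hfix x h.1 h.2)
  have hcard : #π.support ≤ 2 := (card_le_card hsub).trans card_le_two
  have htwo : #π.support ≠ 2 := fun h => by
    rw [(card_support_eq_two.1 h).sign_eq] at hπ
    exact absurd hπ (by decide)
  have := card_support_ne_one π
  exact card_support_eq_zero.1 (by omega)

theorem mem_insert_one_threeCyclesThrough_pow (hpq : p ≠ q) (s : Finset α) {π : Perm α}
    (hπ : sign π = 1) (hfix : ∀ x ∉ s, x ≠ p → x ≠ q → π x = x) :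
    π ∈ insert 1 (threeCyclesThrough p q) ^ (2 * #s) := by
  induction s using Finset.induction_on generalizing π with
  | empty =>
    rw [eq_one_of_sign_eq_one_of_forall_apply_eq_self hπ fun x => hfix x (notMem_empty x)]
    exact Set.one_mem_pow (Set.mem_insert 1 _)
  | insert k s hks ih =>
    rw [card_insert_of_notMem hks, mul_add_one, add_comm, pow_add]
    by_cases hk : k = p ∨ k = q
    · refine Set.mul_mem_mul (Set.one_mem_pow (Set.mem_insert 1 _)) (ih hπ fun x hxs hxp hxq => ?_)
      exact hfix x (fun h => (mem_insert.1 h).elim (fun h => by subst h; tauto) hxs) hxp hxq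
    simp only [not_or] at hk
    obtain ⟨u, hu, v, hv, hk', hfix'⟩ := exists_mul_mem_threeCyclesThrough_apply_eq hk.1 hk.2 (π k)
    rw [← mul_inv_cancel_left (u * v) π, pow_two]
    refine Set.mul_mem_mul (Set.mul_mem_mul hu hv) (ih ?_ fun x hxs hxp hxq => ?_)
    · simp [sign_eq_one_of_mem_insert_one_threeCyclesThrough hpq hu,
        sign_eq_one_of_mem_insert_one_threeCyclesThrough hpq hv, hπ]
    rw [Perm.mul_apply, inv_eq_iff_eq]
    by_cases hxk : x = k
    · rw [hxk, hk']
    have hπx := hfix x (by simp [hxk, hxs]) hxp hxq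
    rw [hπx, hfix' x hxp hxq hxk fun h => hxk (π.injective (hπx.trans h))]

theorem threeCyclesThrough_subset_pow (hpq : p ≠ q) {k₀ : α} (hk₀p : k₀ ≠ p) (hk₀q : k₀ ≠ q)
    {b : Perm α} {L : ℕ} (hb : Commute b (swap p q)) (hL : b ^ L = 1)
    (horbit : ∀ k, k ≠ p → k ≠ q → ∃ i < L, (b ^ i) k₀ = k) :
    threeCyclesThrough p q ⊆ insert 1 {swap p q * swap p k₀, b} ^ (L + 2) := by
  set a := swap p q * swap p k₀
  set S : Set (Perm α) := insert 1 {a, b}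
  rintro t ⟨x, hx, k, hkp, hkq, rfl⟩
  obtain ⟨i, hi, rfl⟩ := horbit k hkp hkq
  have hinv : b ^ (L - i) = (b ^ i)⁻¹ :=
    eq_inv_of_mul_eq_one_right (by rw [← pow_add, Nat.add_sub_cancel' hi.le, hL])
  have hconj : ∀ e ≤ 2, b ^ i * a ^ e * (b ^ i)⁻¹ ∈ S ^ (L + 2) := fun e he => by
    have hbS : b ∈ S := by simp [S]
    have := Set.mul_mem_mul (Set.mul_mem_mul (Set.pow_mem_pow (n := i) hbS)
      (Set.pow_mem_pow (n := e) (show a ∈ S by simp [S]))) (Set.pow_mem_pow (n := L - i) hbS)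
    rw [← pow_add, ← pow_add, hinv] at this
    exact Set.pow_subset_pow_right (Set.mem_insert 1 _) (by omega) this
  have hg : b ^ i * swap p q * (b ^ i)⁻¹ = swap p q := by
    rw [(hb.pow_left i).eq, mul_inv_cancel_right]
  have hgp : (b ^ i) p ∈ ({p, q} : Set α) := by
    have hne : swap p q ((b ^ i) p) ≠ (b ^ i) p := by
      rw [← Perm.mul_apply, ← (hb.pow_left i).eq, Perm.mul_apply, swap_apply_left]
      exact (b ^ i).injective.ne hpq.symm
    exact (swap_apply_ne_self_iff.1 hne).2
  have ha : a⁻¹ = a ^ 2 := by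
    have h3 := (isThreeCycle_swap_mul_swap_same hpq hk₀p.symm hk₀q.symm).orderOf
    refine (eq_inv_of_mul_eq_one_left ?_).symm
    rw [← pow_succ, show 2 + 1 = orderOf a from h3.symm]
    exact pow_orderOf_eq_one a
  have hc : b ^ i * a * (b ^ i)⁻¹ = swap p q * swap ((b ^ i) p) ((b ^ i) k₀) := by
    rw [swap_apply_apply, ← hg]
    simp only [a]
    group
  rcases swap_mul_swap_eq_or_eq_inv hx hgp hkp hkq with h | h
  · rw [h, ← hc]
    simpa using hconj 1 (by norm_num)
  · rw [h, ← hc, mul_inv_rev, mul_inv_rev, inv_inv, ha, ← mul_assoc]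
    exact hconj 2 le_rfl

theorem mem_insert_one_pow_of_sign_eq_one (hpq : p ≠ q) {k₀ : α} (hk₀p : k₀ ≠ p) (hk₀q : k₀ ≠ q)
    {b : Perm α} {L : ℕ} (hb : Commute b (swap p q)) (hL : b ^ L = 1)
    (horbit : ∀ k, k ≠ p → k ≠ q → ∃ i < L, (b ^ i) k₀ = k) {π : Perm α} (hπ : sign π = 1) :
    π ∈ (insert 1 {swap p q * swap p k₀, b} : Set (Perm α)) ^ ((L + 2) * (2 * Fintype.card α)) :=
  insert_one_pow_subset (threeCyclesThrough_subset_pow hpq hk₀p hk₀q hb hL horbit)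
    (mem_insert_one_threeCyclesThrough_pow hpq univ hπ (by simp))

end ThreeCycles

section FormPerm

variable {α : Type*} [DecidableEq α] {p q k₀ : α}

lemma exists_pow_formPerm_apply_eq {l : List α} (hl : (k₀ :: l).Nodup) {k : α}
    (hk : k ∈ k₀ :: l) : ∃ i < (k₀ :: l).length, (List.formPerm (k₀ :: l) ^ i) k₀ = k := by
  obtain ⟨i, hi, rfl⟩ := List.mem_iff_getElem.1 hk
  refine ⟨i, hi, ?_⟩
  have := List.formPerm_pow_apply_getElem _ hl i 0 (by simp)
  simp only [zero_add, Nat.mod_eq_of_lt hi] at this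
  exact this

lemma commute_formPerm_swap {l : List α} (hp : p ∉ l) (hq : q ∉ l) :
    Commute l.formPerm (swap p q) := by
  rw [Commute, SemiconjBy, ← mul_inv_eq_iff_eq_mul, ← swap_apply_apply,
    List.formPerm_apply_of_notMem hp, List.formPerm_apply_of_notMem hq]

lemma swap_pow_mul_pow_eq_one {c : Perm α} {n : ℕ} (hc : Commute c (swap p q)) (hn : c ^ n = 1)
    (e : ℕ) : (swap p q ^ e * c) ^ (2 * n) = 1 := by
  rw [(hc.symm.pow_left e).mul_pow, ← pow_mul, pow_mul' c, hn, one_pow, mul_one,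
    show e * (2 * n) = 2 * (e * n) by ring, pow_mul, sq, swap_mul_self, one_pow]

variable {l : List α} (hl : (k₀ :: l).Nodup) (hp : p ∉ k₀ :: l) (hq : q ∉ k₀ :: l)
include hl hp hq

lemma exists_mul_swap_pow_mul_formPerm_eq (hpq : p ≠ q) {e : ℕ} (he : e < 2) :
    ∃ L : List α, L.Nodup ∧ (L.length = l.length + 2 ∨ L.length = l.length + 3) ∧
      swap p q * swap p k₀ * (swap p q ^ e * (k₀ :: l).formPerm) = L.formPerm := by
  interval_cases e
  · refine ⟨q :: p :: k₀ :: l, ?_, by simp, ?_⟩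
    · simp_all [List.nodup_cons, Ne.symm hpq]
    simp only [pow_zero, one_mul, List.formPerm_cons_cons, swap_comm q p, mul_assoc]
  · refine ⟨q :: k₀ :: l, List.nodup_cons.2 ⟨hq, hl⟩, by simp, ?_⟩
    simp only [List.mem_cons, not_or] at hp hq
    rw [List.formPerm_cons_cons, ← swap_mul_swap_mul_swap (Ne.symm hp.1) (Ne.symm hq.1)]
    simp only [pow_one, swap_comm k₀ p, mul_assoc]

variable [Fintype α]

theorem mem_insert_one_pow_swap_pow_mul_formPerm (hpq : p ≠ q)
    (hmem : ∀ x, x ≠ p → x ≠ q → x ∈ k₀ :: l) (e : ℕ) {π : Perm α} (hπ : sign π = 1) :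
    π ∈ (insert 1 {swap p q * swap p k₀, swap p q ^ e * (k₀ :: l).formPerm} : Set (Perm α)) ^
      ((2 * (l.length + 1) + 2) * (2 * Fintype.card α)) := by
  have hc := commute_formPerm_swap hp hq
  have hk₀ : k₀ ≠ p ∧ k₀ ≠ q := by
    simp only [List.mem_cons, not_or] at hp hq
    exact ⟨Ne.symm hp.1, Ne.symm hq.1⟩
  refine mem_insert_one_pow_of_sign_eq_one hpq hk₀.1 hk₀.2
    (((Commute.refl _).pow_left e).mul_left hc)
    (swap_pow_mul_pow_eq_one hc (List.formPerm_pow_length_eq_one_of_nodup _ hl) e)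
    (fun k hkp hkq => ?_) hπ
  obtain ⟨i, hi, hik⟩ := exists_pow_formPerm_apply_eq hl (hmem k hkp hkq)
  refine ⟨i, by simp only [List.length_cons] at hi ⊢; omega, ?_⟩
  rw [(hc.symm.pow_left e).mul_pow, Perm.mul_apply, hik]
  exact pow_apply_eq_self_of_apply_eq_self (pow_apply_eq_self_of_apply_eq_self
    (swap_apply_of_ne_of_ne hkp hkq) e) i

end FormPerm

section EvenPermGenerators

variable {α : Type*} [DecidableEq α] [Fintype α] {p q k₀ : α}

lemma exists_nodup_enumeration (hpq : p ≠ q) (hk₀p : k₀ ≠ p) (hk₀q : k₀ ≠ q) :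
    ∃ l : List α, (k₀ :: l).Nodup ∧ p ∉ k₀ :: l ∧ q ∉ k₀ :: l ∧
      ∀ x, x ≠ p → x ≠ q → x ∈ k₀ :: l := by
  refine ⟨(({p, q, k₀} : Finset α)ᶜ).toList, ?_, ?_, ?_, fun x hxp hxq => ?_⟩
  · simp [Finset.nodup_toList]
  · simp [hpq, hk₀p.symm]
  · simp [hpq.symm, hk₀q.symm]
  · by_cases hx : x = k₀ <;> simp [hx, hxp, hxq]

lemma exists_sign_swap_pow_mul_eq_one (hpq : p ≠ q) (c : Perm α) :
    ∃ e < 2, sign (swap p q ^ e * c) = 1 := by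
  rcases Int.units_eq_one_or (sign c) with h | h
  · exact ⟨0, by norm_num, by simp [h]⟩
  · exact ⟨1, by norm_num, by simp [h, sign_swap hpq]⟩

theorem exists_even_perm_generators (hpq : p ≠ q) (hk₀p : k₀ ≠ p) (hk₀q : k₀ ≠ q) :
    ∃ b : Perm α, sign b = 1 ∧ ∃ M, ¬ 3 ∣ M ∧ M ≤ 2 * Fintype.card α ∧ b ^ M = 1 ∧
      ∀ π : Perm α, sign π = 1 →
        π ∈ (insert 1 {swap p q * swap p k₀, b} : Set (Perm α)) ^ (12 * Fintype.card α ^ 2) := by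
  obtain ⟨l, hl, hp, hq, hmem⟩ := exists_nodup_enumeration hpq hk₀p hk₀q
  have hlen : l.length + 3 ≤ Fintype.card α := by
    have := (List.nodup_cons.2 ⟨by simp_all [Ne.symm hpq], List.nodup_cons.2 ⟨hp, hl⟩⟩ :
      (q :: p :: k₀ :: l).Nodup).length_le_card
    simp only [List.length_cons] at this
    omega
  have hexp : 3 * ((2 * (l.length + 1) + 2) * (2 * Fintype.card α)) ≤
      12 * Fintype.card α ^ 2 := by nlinarith
  set a := swap p q * swap p k₀
  have ha := isThreeCycle_swap_mul_swap_same hpq hk₀p.symm hk₀q.symm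
  obtain ⟨e, he, hsign⟩ := exists_sign_swap_pow_mul_eq_one hpq (k₀ :: l).formPerm
  have hword := fun π (hπ : sign π = 1) =>
    mem_insert_one_pow_swap_pow_mul_formPerm hl hp hq hpq hmem e hπ
  -- With `n = card α`: `b ^ (2 (n - 2)) = 1`, and `a * b` is an `n`- or `(n - 1)`-cycle.
  by_cases h3 : 3 ∣ l.length + 1
  · obtain ⟨L, hL, hLlen, hab⟩ := exists_mul_swap_pow_mul_formPerm_eq hl hp hq hpq he
    refine ⟨_, by rw [map_mul, ha.sign, hsign, one_mul], L.length, by omega, by omega,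
      hab ▸ List.formPerm_pow_length_eq_one_of_nodup _ hL, fun π hπ => ?_⟩
    exact Set.pow_subset_pow_right (Set.mem_insert 1 _) hexp
      (insert_one_pow_subset_insert_mul (ha.orderOf ▸ pow_orderOf_eq_one a) (hword π hπ))
  · refine ⟨_, hsign, 2 * (l.length + 1), by omega, by omega,
      swap_pow_mul_pow_eq_one (commute_formPerm_swap hp hq)
        (List.formPerm_pow_length_eq_one_of_nodup _ hl) e, fun π hπ => ?_⟩
    exact Set.pow_subset_pow_right (Set.mem_insert 1 _)
      ((Nat.le_mul_of_pos_left _ (by norm_num)).trans hexp) (hword π hπ)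

end EvenPermGenerators

theorem exists_alternatingGroup_generators {α : Type*} [DecidableEq α] [Fintype α]
    (hα : 2 < Fintype.card α) :
    ∃ a b : alternatingGroup α, a ≠ b ∧ a ^ 3 = 1 ∧
      ∃ M, ¬ 3 ∣ M ∧ M ≤ 2 * Fintype.card α ∧ b ^ M = 1 ∧
        ∀ g, g ∈ (insert 1 {a, b} : Set (alternatingGroup α)) ^ (12 * Fintype.card α ^ 2) := by
  obtain ⟨p, q, k₀, hpq, hpk₀, hqk₀⟩ := Fintype.two_lt_card_iff.1 hα
  have ha := isThreeCycle_swap_mul_swap_same hpq hpk₀ hqk₀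
  obtain ⟨b, hb, M, hM, hMle, hbM, hword⟩ :=
    exists_even_perm_generators hpq hpk₀.symm hqk₀.symm
  set a := swap p q * swap p k₀
  set a' : alternatingGroup α := ⟨a, mem_alternatingGroup.2 ha.sign⟩
  set b' : alternatingGroup α := ⟨b, mem_alternatingGroup.2 hb⟩
  have himage : (alternatingGroup α).subtype '' insert 1 {a', b'} = insert 1 {a, b} := by
    simp [Set.image_insert_eq, a', b']
  refine ⟨a', b', fun h => hM ?_, Subtype.ext (ha.orderOf ▸ pow_orderOf_eq_one a), M, hM, hMle,
    Subtype.ext hbM, fun g => ?_⟩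
  · have hab : a = b := congrArg Subtype.val h
    rw [← ha.orderOf]
    exact orderOf_dvd_of_pow_eq_one (hab ▸ hbM)
  · obtain ⟨g', hg', hgg'⟩ : (g : Perm α) ∈ (alternatingGroup α).subtype '' _ := by
      rw [Set.image_pow, himage]
      exact hword g (mem_alternatingGroup.1 g.2)
    rwa [← Subtype.ext hgg']

lemma sq_le_exp_mul_log_pow_four_mul_log_log {x : ℝ} (hx : 5 ≤ x) :
    x ^ 2 ≤ Real.exp (10 * Real.log x ^ 4 * Real.log (Real.log x)) := by
  set t := Real.log x
  have ht : 1.38 ≤ t := by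
    have h4 : Real.log 4 ≤ t := Real.log_le_log (by norm_num) (by linarith)
    have h2 : Real.log 4 = 2 * Real.log 2 := by
      rw [show (4 : ℝ) = 2 ^ 2 by norm_num, Real.log_pow, Nat.cast_ofNat]
    linarith [Real.log_two_gt_d9]
  have hlog : 1 - t⁻¹ ≤ Real.log t := Real.one_sub_inv_le_log_of_pos (by linarith)
  have key : 2 * t ≤ 10 * t ^ 4 * Real.log t := by
    have h5 : 1 ≤ 5 * t ^ 2 * (t - 1) := by nlinarith
    calc 2 * t ≤ 2 * t * (5 * t ^ 2 * (t - 1)) := le_mul_of_one_le_right (by linarith) h5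
      _ = 10 * t ^ 4 * (1 - t⁻¹) := by field_simp; ring
      _ ≤ 10 * t ^ 4 * Real.log t := mul_le_mul_of_nonneg_left hlog (by positivity)
  calc x ^ 2 = Real.exp (2 * t) := by
        rw [show (2 : ℝ) * t = (2 : ℕ) * t by norm_num, Real.exp_nat_mul, Real.exp_log (by linarith)]
    _ ≤ _ := Real.exp_le_exp.2 key

/-- There are absolute constants `C, c > 0` such that for every `n ≥ 5` there is a
generating set `S` of `Aₙ²` of size two with
`diam (Aₙ², S) ≤ C · n · exp ((c+1) (log n)⁴ log log n)`. -/
theorem diam_sq_alternating_bound :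
    ∃ C c : ℝ, 0 < C ∧ 0 < c ∧
      ∀ n : ℕ, 5 ≤ n →
        ∃ S : Finset (↥(alternatingGroup (Fin n)) × ↥(alternatingGroup (Fin n))),
          S.card = 2 ∧
          Subgroup.closure (S : Set (↥(alternatingGroup (Fin n)) × ↥(alternatingGroup (Fin n)))) = ⊤ ∧
          (diam (↥(alternatingGroup (Fin n)) × ↥(alternatingGroup (Fin n)))
              (S : Set (↥(alternatingGroup (Fin n)) × ↥(alternatingGroup (Fin n)))) : ℝ) ≤
            C * n * Real.exp ((c + 1) * (Real.log n) ^ 4 * Real.log (Real.log n)) := by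
  refine ⟨144, 9, by norm_num, by norm_num, fun n hn => ?_⟩
  obtain ⟨a, b, hab, ha, M, hM, hMle, hbM, hword⟩ :=
    exists_alternatingGroup_generators (α := Fin n) (by simp; omega)
  simp only [Fintype.card_fin] at hMle hword
  have hS := prod_mem_insert_one_pow_of_coprime (by norm_num) (by omega)
    ((Nat.Prime.coprime_iff_not_dvd Nat.prime_three).2 hM) ha hbM hword
  refine ⟨{(a, b), (b, a)}, Finset.card_pair fun h => hab (Prod.ext_iff.1 h).1, ?_, ?_⟩
  · simpa using closure_eq_top_of_forall_mem_insert_one_pow hS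
  rw [Finset.coe_pair]
  have hM' : (M : ℝ) ≤ 2 * n := by exact_mod_cast hMle
  calc (diam _ {(a, b), (b, a)} : ℝ) ≤ (2 * (3 * M * (12 * n ^ 2)) : ℕ) :=
        Nat.cast_le.2 (diam_le_of_forall_mem_insert_one_pow hS)
    _ ≤ 144 * n * n ^ 2 := by push_cast; nlinarith [sq_nonneg (n : ℝ)]
    _ ≤ 144 * n * Real.exp ((9 + 1) * Real.log n ^ 4 * Real.log (Real.log n)) := by
      gcongr
      norm_num
      exact sq_le_exp_mul_log_pow_four_mul_log_log (by exact_mod_cast hn)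
end
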